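/- Let G be a simple connected graph. Then the normalized Laplacian energy of G satisfies 𝓛E(G) ≥ 2·R_{−1}(G), where R_{−1}(G) = Σ_{{v_i,v_j}∈E} 1/(d_i d_j). -/

import Mathlib

open Matrix BigOperators Finset

/-- The absolute value of a real matrix `B`, defined as `(B * Bᵀ)^(1/2)`. -/
noncomputable def matAbs {n : ℕ} (B : Matrix (Fin n) (Fin n) ℝ) : Matrix (Fin n) (Fin n) ℝ :=
  let hA : (B * Bᵀ).PosSemidef := Matrix.conjTranspose_eq_transpose_of_trivial B ▸
    Matrix.posSemidef_self_mul_conjTranspose B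
  hA.1.eigenvectorUnitary.1 * Matrix.diagonal ((↑) ∘ (√·) ∘ hA.1.eigenvalues) *
    (star hA.1.eigenvectorUnitary : Matrix (Fin n) (Fin n) ℝ)

/-- The (adjacency) energy of the vertex `i` of the graph `G`: `|A|_{ii}`. -/
noncomputable def vertexEnergy {n : ℕ} (G : SimpleGraph (Fin n)) [DecidableRel G.Adj]
    (i : Fin n) : ℝ :=
  matAbs (G.adjMatrix ℝ) i i

/-- The Laplacian energy of the vertex `i` of the graph `G`: `(|L - (2m/n) I|)_{ii}`. -/
noncomputable def vertexLapEnergy {n : ℕ} (G : SimpleGraph (Fin n)) [DecidableRel G.Adj]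
    (i : Fin n) : ℝ :=
  matAbs (G.lapMatrix ℝ - ((2 * (G.edgeFinset.card : ℝ)) / n) • 1) i i

/-- The normalized Laplacian `𝓛 = I - D^{-1/2} A D^{-1/2}` of the graph `G`. -/
noncomputable def normLap {n : ℕ} (G : SimpleGraph (Fin n)) [DecidableRel G.Adj] :
    Matrix (Fin n) (Fin n) ℝ :=
  1 - Matrix.diagonal (fun i => (Real.sqrt (G.degree i))⁻¹) * G.adjMatrix ℝ *
      Matrix.diagonal (fun i => (Real.sqrt (G.degree i))⁻¹)

/-- The normalized Laplacian energy of the vertex `i` of the graph `G`: `(|𝓛 - I|)_{ii}`. -/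
noncomputable def vertexNormLapEnergy {n : ℕ} (G : SimpleGraph (Fin n)) [DecidableRel G.Adj]
    (i : Fin n) : ℝ :=
  matAbs (normLap G - 1) i i

/-- The normalized Laplacian energy of the graph `G`: `tr(|𝓛 - I|)`. -/
noncomputable def normLapEnergy {n : ℕ} (G : SimpleGraph (Fin n)) [DecidableRel G.Adj] : ℝ :=
  (matAbs (normLap G - 1)).trace

/-- The Randić index `R_{-1}(G) = Σ_{{v_i,v_j} ∈ E} 1/(d_i d_j)`. -/
noncomputable def randicOne {n : ℕ} (G : SimpleGraph (Fin n)) [DecidableRel G.Adj] : ℝ :=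
  ∑ e ∈ G.edgeFinset,
    Sym2.lift ⟨fun i j => 1 / ((G.degree i : ℝ) * (G.degree j : ℝ)),
      fun i j => by simp [mul_comm]⟩ e

/-! `𝓛 - I = -N` with `N = D^{-1/2} A D^{-1/2}`, so `𝓛E(G) = Σ |μᵢ|` over the eigenvalues `μᵢ`
of `N`. Since `2|xᵢxⱼ| ≤ xᵢ² + xⱼ²`, the quadratic form of `N` is bounded by `‖x‖²`, hence
`|μᵢ| ≤ 1` and `Σ |μᵢ| ≥ Σ μᵢ² = tr(N²) = Σ_{i ∼ j} 1/(dᵢdⱼ) = 2 R_{-1}(G)`. -/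

open scoped MatrixOrder

namespace Matrix.IsHermitian

variable {𝕜 m : Type*} [RCLike 𝕜] [Fintype m] [DecidableEq m] {A : Matrix m m 𝕜}

lemma trace_cfc (hA : A.IsHermitian) (f : ℝ → ℝ) :
    (cfc f A).trace = ∑ i, (f (hA.eigenvalues i) : 𝕜) := by
  rw [hA.cfc_eq, IsHermitian.cfc, Unitary.conjStarAlgAut_apply, trace_mul_cycle,
    Unitary.coe_star_mul_self, Matrix.one_mul, trace_diagonal]
  rfl

end Matrix.IsHermitian

section matAbs

variable {n : ℕ}

lemma matAbs_eq_abs_transpose (B : Matrix (Fin n) (Fin n) ℝ) : matAbs B = CFC.abs Bᵀ := by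
  have hA : (B * Bᵀ).IsHermitian := isHermitian_mul_conjTranspose_self B
  rw [show matAbs B = hA.cfc Real.sqrt from rfl, ← hA.cfc_eq, CFC.abs, star_eq_conjTranspose,
    conjTranspose_eq_transpose_of_trivial,
    transpose_transpose, CFC.sqrt_eq_real_sqrt (B * Bᵀ)
      (conjTranspose_eq_transpose_of_trivial B ▸ (posSemidef_self_mul_conjTranspose B).nonneg),
    cfcₙ_eq_cfc]

lemma matAbs_neg (B : Matrix (Fin n) (Fin n) ℝ) : matAbs (-B) = matAbs B := by
  rw [matAbs_eq_abs_transpose, matAbs_eq_abs_transpose, transpose_neg, CFC.abs_neg]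

lemma Matrix.IsHermitian.trace_matAbs {B : Matrix (Fin n) (Fin n) ℝ} (hB : B.IsHermitian) :
    (matAbs B).trace = ∑ i, |hB.eigenvalues i| := by
  rw [matAbs_eq_abs_transpose, ← conjTranspose_eq_transpose_of_trivial, hB,
    CFC.abs_eq_cfc_norm B hB.isSelfAdjoint, hB.trace_cfc]
  rfl

lemma Matrix.IsHermitian.trace_mul_self {B : Matrix (Fin n) (Fin n) ℝ} (hB : B.IsHermitian) :
    (B * B).trace = ∑ i, hB.eigenvalues i ^ 2 := by
  rw [← sq, ← cfc_pow_id (R := ℝ) B 2 hB.isSelfAdjoint, hB.trace_cfc]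
  rfl

lemma Matrix.IsHermitian.abs_eigenvalues_le_one {B : Matrix (Fin n) (Fin n) ℝ}
    (hB : B.IsHermitian) (h : ∀ x, |x ⬝ᵥ B *ᵥ x| ≤ x ⬝ᵥ x) (i : Fin n) :
    |hB.eigenvalues i| ≤ 1 := by
  have hv : (hB.eigenvectorBasis i).ofLp ⬝ᵥ (hB.eigenvectorBasis i).ofLp = 1 := by
    have := (orthonormal_iff_ite.mp hB.eigenvectorBasis.orthonormal) i i
    rwa [if_pos rfl, EuclideanSpace.inner_eq_star_dotProduct, star_trivial, dotProduct_comm] at this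
  simpa [hB.eigenvalues_eq i, hv] using h (hB.eigenvectorBasis i)

end matAbs

namespace SimpleGraph

variable {V : Type*} [Fintype V] (G : SimpleGraph V) [DecidableRel G.Adj]

lemma inv_sqrt_degree_sq (i : V) : (√(G.degree i : ℝ))⁻¹ ^ 2 = (G.degree i : ℝ)⁻¹ := by
  rw [inv_pow, Real.sq_sqrt (Nat.cast_nonneg _)]

lemma sum_degree_mul_eq_sum_adj (x : V → ℝ) :
    ∑ i, (G.degree i : ℝ) * x i ^ 2 =
      ∑ i, ∑ j, if G.Adj i j then (x i ^ 2 + x j ^ 2) / 2 else 0 := by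
  have hfst : ∑ i, (G.degree i : ℝ) * x i ^ 2 = ∑ i, ∑ j, if G.Adj i j then x i ^ 2 else 0 := by
    simp_rw [degree_eq_sum_if_adj, Finset.sum_mul, ite_mul, one_mul, zero_mul]
  have hsnd : ∑ i, ∑ j, (if G.Adj i j then x i ^ 2 else 0) =
      ∑ i, ∑ j, if G.Adj i j then x j ^ 2 else 0 := by
    rw [Finset.sum_comm]
    simp_rw [G.adj_comm]
  have hsplit : ∑ i, ∑ j, (if G.Adj i j then (x i ^ 2 + x j ^ 2) / 2 else 0) =
      ((∑ i, ∑ j, if G.Adj i j then x i ^ 2 else 0) +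
        ∑ i, ∑ j, if G.Adj i j then x j ^ 2 else 0) / 2 := by
    simp only [← Finset.sum_add_distrib, Finset.sum_div]
    refine Finset.sum_congr rfl fun i _ => Finset.sum_congr rfl fun j _ => ?_
    split_ifs <;> ring
  rw [hsplit, ← hsnd, hfst]
  ring

lemma abs_dotProduct_adjMatrix_mulVec_le (x : V → ℝ) :
    |x ⬝ᵥ G.adjMatrix ℝ *ᵥ x| ≤ ∑ i, (G.degree i : ℝ) * x i ^ 2 := by
  rw [dotProduct_mulVec_adjMatrix, sum_degree_mul_eq_sum_adj]
  refine (Finset.abs_sum_le_sum_abs _ _).trans <| Finset.sum_le_sum fun i _ =>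
    (Finset.abs_sum_le_sum_abs _ _).trans <| Finset.sum_le_sum fun j _ => ?_
  split_ifs
  · exact abs_le.mpr ⟨by nlinarith [sq_nonneg (x i + x j)], by nlinarith [sq_nonneg (x i - x j)]⟩
  · simp

lemma two_mul_sum_edgeFinset_lift (f : {f : V → V → ℝ // ∀ a b, f a b = f b a}) :
    2 * ∑ e ∈ G.edgeFinset, Sym2.lift f e = ∑ i, ∑ j, if G.Adj i j then f.1 i j else 0 := by
  classical
  have hfiber : ∀ e ∈ G.edgeFinset,
      ∑ d ∈ Finset.univ.filter (fun d : G.Dart => d.edge = e), Sym2.lift f d.edge =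
        2 * Sym2.lift f e := by
    intro e he
    rw [Finset.sum_congr rfl fun d hd => by rw [(Finset.mem_filter.mp hd).2], Finset.sum_const,
      G.dart_edge_fiber_card e (G.mem_edgeFinset.mp he), nsmul_eq_mul, Nat.cast_ofNat]
  rw [Finset.mul_sum, ← Finset.sum_congr rfl hfiber, Finset.sum_fiberwise_of_maps_to
    (fun d _ => G.mem_edgeFinset.mpr d.edge_mem), ← Finset.sum_product', ← Finset.sum_filter]
  refine Finset.sum_bij' (fun d _ => (d.fst, d.snd)) (fun p hp => ⟨p, (Finset.mem_filter.1 hp).2⟩)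
    ?_ ?_ ?_ ?_ (fun _ _ => rfl) <;> simp

end SimpleGraph

section normAdjMatrix

variable {n : ℕ} (G : SimpleGraph (Fin n)) [DecidableRel G.Adj]

noncomputable def normAdjMatrix : Matrix (Fin n) (Fin n) ℝ :=
  diagonal (fun i => (√(G.degree i))⁻¹) * G.adjMatrix ℝ * diagonal (fun i => (√(G.degree i))⁻¹)

lemma normLap_sub_one : normLap G - 1 = -normAdjMatrix G :=
  sub_sub_cancel_left _ _

lemma normAdjMatrix_apply (i j : Fin n) :
    normAdjMatrix G i j = if G.Adj i j then (√(G.degree i))⁻¹ * (√(G.degree j))⁻¹ else 0 := by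
  rw [normAdjMatrix, mul_diagonal, diagonal_mul, SimpleGraph.adjMatrix_apply]
  split_ifs <;> ring

lemma isHermitian_normAdjMatrix : (normAdjMatrix G).IsHermitian := by
  refine Matrix.IsHermitian.ext fun i j => ?_
  simp only [normAdjMatrix_apply, star_trivial, G.adj_comm j i, mul_comm]

lemma abs_dotProduct_normAdjMatrix_mulVec_le (x : Fin n → ℝ) :
    |x ⬝ᵥ normAdjMatrix G *ᵥ x| ≤ x ⬝ᵥ x := by
  set y : Fin n → ℝ := fun i => (√(G.degree i))⁻¹ * x i
  have hquad : x ⬝ᵥ normAdjMatrix G *ᵥ x = y ⬝ᵥ G.adjMatrix ℝ *ᵥ y := by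
    rw [SimpleGraph.dotProduct_mulVec_adjMatrix]
    simp only [dotProduct, mulVec, normAdjMatrix_apply, Finset.mul_sum, y]
    refine Finset.sum_congr rfl fun i _ => Finset.sum_congr rfl fun j _ => ?_
    split_ifs <;> ring
  have hdeg : ∀ i, (G.degree i : ℝ) * y i ^ 2 ≤ x i * x i := fun i => by
    rcases eq_or_ne (G.degree i) 0 with h | h
    · simp [h, mul_self_nonneg]
    · have : (G.degree i : ℝ) * (√(G.degree i))⁻¹ ^ 2 = 1 := by
        rw [G.inv_sqrt_degree_sq, mul_inv_cancel₀ (by exact_mod_cast h)]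
      nlinarith [this]
  rw [hquad]
  exact (G.abs_dotProduct_adjMatrix_mulVec_le y).trans (Finset.sum_le_sum fun i _ => hdeg i)

lemma trace_normAdjMatrix_mul_self :
    (normAdjMatrix G * normAdjMatrix G).trace = 2 * randicOne G := by
  rw [randicOne, SimpleGraph.two_mul_sum_edgeFinset_lift]
  simp only [trace, diag_apply, mul_apply, normAdjMatrix_apply]
  refine Finset.sum_congr rfl fun i _ => Finset.sum_congr rfl fun j _ => ?_
  by_cases h : G.Adj i j
  · rw [if_pos h, if_pos h.symm, if_pos h, one_div, mul_inv, ← G.inv_sqrt_degree_sq,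
      ← G.inv_sqrt_degree_sq]
    ring
  · rw [if_neg h, if_neg h, zero_mul]

end normAdjMatrix

theorem stmt16_general {n : ℕ} (G : SimpleGraph (Fin n)) [DecidableRel G.Adj] :
    normLapEnergy G ≥ 2 * randicOne G := by
  have hN := isHermitian_normAdjMatrix G
  have hμ := hN.abs_eigenvalues_le_one (abs_dotProduct_normAdjMatrix_mulVec_le G)
  calc 2 * randicOne G = ∑ i, hN.eigenvalues i ^ 2 := by
        rw [← trace_normAdjMatrix_mul_self, hN.trace_mul_self]
    _ ≤ ∑ i, |hN.eigenvalues i| := Finset.sum_le_sum fun i _ => by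
        rw [← sq_abs]; nlinarith [hμ i, abs_nonneg (hN.eigenvalues i)]
    _ = normLapEnergy G := by
        rw [normLapEnergy, normLap_sub_one, matAbs_neg, hN.trace_matAbs]

theorem stmt16 {n : ℕ} (G : SimpleGraph (Fin n)) [DecidableRel G.Adj]
    (hconn : G.Connected) :
    normLapEnergy G ≥ 2 * randicOne G :=
  stmt16_general G
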